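/- arXiv:1411.0264 — 5 statements merged into one kernel-verified Lean document; each statement's English description precedes it below -/
import Mathlib

section
/- Let G be a graph with maximum degree x, and let E be its edge set. For each edge e = {u,v} choose an endpoint Out(e) uniformly and independently at random, and let Out(E) = {Out(e) : e ∈ E}. Then for any subset S of V(G), Pr(S ⊆ Out(E)) ≤ (1 - 2^{-x})^{|S|/(x+1)}. -/
open SimpleGraph

/-- The type of functions choosing one endpoint of every edge of `G`. -/
def EdgeChoice {V : Type} [Fintype V] [DecidableEq V] (G : SimpleGraph V)
    [DecidableRel G.Adj] : Type :=
  {f : G.edgeSet → V // ∀ e : G.edgeSet, f e ∈ (e : Sym2 V)}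

/-- The probability, under the uniform random choice of one endpoint of every edge,
that the chosen edge-choice function satisfies the predicate `P`. -/
noncomputable def choiceProb {V : Type} [Fintype V] [DecidableEq V] (G : SimpleGraph V)
    [DecidableRel G.Adj] (P : EdgeChoice G → Prop) : ℝ :=
  (Nat.card {f : EdgeChoice G // P f} : ℝ) / (Nat.card (EdgeChoice G) : ℝ)

/-!
The vertices of an independent set `T` are incident to pairwise disjoint sets of edges, so the
events `v ∈ Out(E)`, `v ∈ T`, are independent; and `v` is missed only if each of its `deg v`
edges picks its other endpoint. Hence `Pr(T ⊆ Out(E)) = ∏_{v ∈ T} (1 - 2^{-deg v})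
≤ (1 - 2^{-x})^{|T|}`. A largest independent subset `T` of `S` dominates `S`, so
`|S| ≤ |T| (x + 1)`, and `S ⊆ Out(E)` implies `T ⊆ Out(E)`.
-/

open Finset

theorem Sym2.natCard_mem_of_not_isDiag {α : Type*} [DecidableEq α] {z : Sym2 α}
    (hz : ¬z.IsDiag) : Nat.card {a // a ∈ z} = 2 := by
  rw [← Sym2.card_toFinset_of_not_isDiag _ hz, ← Nat.card_eq_finsetCard]
  exact Nat.card_congr (Equiv.subtypeEquivRight fun _ => Sym2.mem_toFinset.symm)

theorem Nat.card_subtype_and_of_equiv_prod {α β γ : Type*} (E : α ≃ β × γ) {P : α → Prop}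
    {A : β → Prop} {B : γ → Prop} (h : ∀ x, P x ↔ A (E x).1 ∧ B (E x).2) :
    Nat.card {x // P x} = Nat.card {b // A b} * Nat.card {c // B c} := by
  rw [← Nat.card_prod]
  exact Nat.card_congr ((E.subtypeEquiv h).trans Equiv.subtypeProdEquivProd)

namespace SimpleGraph

variable {V : Type*} (G : SimpleGraph V)

abbrev EdgeChoiceOn (p : G.edgeSet → Prop) : Type _ :=
  ∀ e : {e : G.edgeSet // p e}, {u : V // u ∈ (e.1 : Sym2 V)}

theorem card_edgeChoiceOn_incident_avoiding (v : V) :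
    Nat.card {a : G.EdgeChoiceOn (v ∈ ·.1) // ∀ e, (a e : V) ≠ v} = 1 := by
  refine Nat.card_eq_one_iff_exists.2 ⟨⟨fun e => ⟨Sym2.Mem.other e.2, Sym2.other_mem e.2⟩,
    fun e => Sym2.other_ne (G.not_isDiag_of_mem_edgeSet e.1.2) e.2⟩, fun ⟨a, ha⟩ => ?_⟩
  refine Subtype.ext <| funext fun e => Subtype.ext ?_
  have hmem : (a e : V) ∈ s(v, Sym2.Mem.other e.2) := by rw [Sym2.other_spec]; exact (a e).2
  exact (Sym2.mem_iff.1 hmem).resolve_left (ha e)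

variable [Fintype V] [DecidableEq V] [DecidableRel G.Adj]

theorem natCard_edgeSet_subtype_mem (v : V) :
    Nat.card {e : G.edgeSet // v ∈ (e : Sym2 V)} = G.degree v := by
  rw [← card_incidenceSet_eq_degree, ← Nat.card_eq_fintype_card]
  exact Nat.card_congr (Equiv.subtypeSubtypeEquivSubtypeInter (· ∈ G.edgeSet) (v ∈ ·))

theorem card_edgeChoiceOn_incident (v : V) :
    Nat.card (G.EdgeChoiceOn (v ∈ ·.1)) = 2 ^ G.degree v := by
  simp only [Nat.card_pi, Sym2.natCard_mem_of_not_isDiag (G.not_isDiag_of_mem_edgeSet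
    (Subtype.prop _)), prod_const, card_univ, ← Nat.card_eq_fintype_card,
    natCard_edgeSet_subtype_mem]

theorem card_edgeChoiceOn_incident_hitting (v : V) :
    Nat.card {a : G.EdgeChoiceOn (v ∈ ·.1) // ∃ e, (a e : V) = v} = 2 ^ G.degree v - 1 := by
  classical
  rw [← card_edgeChoiceOn_incident, ← Nat.card_congr (Equiv.sumCompl
    fun a : G.EdgeChoiceOn (v ∈ ·.1) => ∃ e, (a e : V) = v), Nat.card_sum]
  simp only [not_exists, ← ne_eq, card_edgeChoiceOn_incident_avoiding, Nat.add_sub_cancel]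

theorem exists_isIndepSet_subset_card_le (S : Finset V) :
    ∃ T ⊆ S, G.IsIndepSet (T : Set V) ∧ #S ≤ #T * (G.maxDegree + 1) := by
  obtain ⟨T, hT, hmax⟩ := (S.powerset.filter fun T : Finset V => G.IsIndepSet (T : Set V))
    |>.exists_max_image card ⟨∅, by simp⟩
  rw [mem_filter, mem_powerset] at hT
  refine ⟨T, hT.1, hT.2, ?_⟩
  have hdominating : S ⊆ T.biUnion fun t => insert t (G.neighborFinset t) := by
    intro s hs
    by_contra hsT
    simp only [mem_biUnion, mem_insert, mem_neighborFinset, not_exists, not_and, not_or] at hsT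
    have hsT' : s ∉ T := fun h => (hsT s h).1 rfl
    have := hmax (insert s T) <| mem_filter.2 ⟨mem_powerset.2 (insert_subset hs hT.1), by
      rw [coe_insert]
      exact hT.2.insert fun t ht _ => ⟨fun h => (hsT t ht).2 h.symm, (hsT t ht).2⟩⟩
    rw [card_insert_of_notMem hsT'] at this
    omega
  calc #S ≤ #(T.biUnion fun t => insert t (G.neighborFinset t)) := card_le_card hdominating
    _ ≤ #T * (G.maxDegree + 1) := card_biUnion_le_card_mul _ _ _ fun t _ =>
        (card_insert_le _ _).trans (by simpa using G.degree_le_maxDegree t)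

end SimpleGraph

namespace EdgeChoice

variable {V : Type} [Fintype V] [DecidableEq V] {G : SimpleGraph V} [DecidableRel G.Adj]

instance : Finite (EdgeChoice G) := Subtype.finite

instance : Nonempty (EdgeChoice G) :=
  ⟨⟨fun e => (e : Sym2 V).out.1, fun _ => Sym2.out_fst_mem _⟩⟩

/-- The set `Out(E)` of chosen endpoints. -/
def out (f : EdgeChoice G) : Set V := Set.range f.1

def splitAt (v : V) : EdgeChoice G ≃ G.EdgeChoiceOn (v ∈ ·.1) × G.EdgeChoiceOn (v ∉ ·.1) :=
  Equiv.subtypePiEquivPi.trans (Equiv.piEquivPiSubtypeProd _ _)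

theorem mem_out_iff_exists_splitAt_fst (f : EdgeChoice G) (v : V) :
    v ∈ f.out ↔ ∃ e, ((splitAt v f).1 e : V) = v :=
  ⟨fun ⟨e, he⟩ => ⟨⟨e, he ▸ f.2 e⟩, he⟩, fun ⟨e, he⟩ => ⟨e.1, he⟩⟩

theorem mem_out_iff_exists_splitAt_snd (f : EdgeChoice G) {u v : V} (huv : u ≠ v)
    (hadj : ¬G.Adj u v) : u ∈ f.out ↔ ∃ e, ((splitAt v f).2 e : V) = u := by
  refine ⟨fun ⟨e, he⟩ => ⟨⟨e, fun hv => hadj ?_⟩, he⟩, fun ⟨e, he⟩ => ⟨e.1, he⟩⟩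
  have : (e : Sym2 V) = s(u, v) := (Sym2.mem_and_mem_iff huv).1 ⟨he ▸ f.2 e, hv⟩
  exact G.mem_edgeSet.1 (this ▸ e.2)

theorem choiceProb_mono {P Q : EdgeChoice G → Prop} (h : ∀ f, P f → Q f) :
    choiceProb G P ≤ choiceProb G Q :=
  div_le_div_of_nonneg_right (Nat.cast_le.2 (Nat.card_mono (Set.toFinite _) h))
    (Nat.cast_nonneg _)

theorem choiceProb_insert_subset_out {v : V} {T : Finset V} (hv : v ∉ T)
    (hT : ∀ u ∈ T, ¬G.Adj u v) :
    choiceProb G (fun f => ↑(insert v T) ⊆ f.out) =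
      (1 - (2 ^ G.degree v : ℝ)⁻¹) * choiceProb G (fun f => ↑T ⊆ f.out) := by
  let Q (b : G.EdgeChoiceOn (v ∉ ·.1)) : Prop := ∀ u ∈ T, ∃ e, (b e : V) = u
  have hQ (f : EdgeChoice G) : ↑T ⊆ f.out ↔ Q (splitAt v f).2 := forall₂_congr fun u hu =>
    mem_out_iff_exists_splitAt_snd f (ne_of_mem_of_not_mem hu hv) (hT u hu)
  have hcard_insert : Nat.card {f : EdgeChoice G // ↑(insert v T) ⊆ f.out} =
      (2 ^ G.degree v - 1) * Nat.card {b // Q b} := by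
    rw [← card_edgeChoiceOn_incident_hitting]
    refine Nat.card_subtype_and_of_equiv_prod (splitAt v) fun f => ?_
    rw [coe_insert, Set.insert_subset_iff, mem_out_iff_exists_splitAt_fst, hQ]
  have hcard : Nat.card {f : EdgeChoice G // ↑T ⊆ f.out} =
      2 ^ G.degree v * Nat.card {b // Q b} := by
    rw [← card_edgeChoiceOn_incident, ← Nat.card_subtype_true (α := G.EdgeChoiceOn (v ∈ ·.1))]
    exact Nat.card_subtype_and_of_equiv_prod (splitAt v) fun f =>
      (hQ f).trans (and_iff_right trivial).symm
  rw [choiceProb, choiceProb, hcard_insert, hcard, Nat.cast_mul, Nat.cast_mul,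
    Nat.cast_sub Nat.one_le_two_pow]
  push_cast
  field_simp

theorem choiceProb_subset_out_of_isIndepSet {T : Finset V} (hT : G.IsIndepSet (T : Set V)) :
    choiceProb G (fun f => ↑T ⊆ f.out) = ∏ v ∈ T, (1 - (2 ^ G.degree v : ℝ)⁻¹) := by
  induction T using Finset.induction_on with
  | empty =>
    simp only [coe_empty, Set.empty_subset, prod_empty, choiceProb, Nat.card_subtype_true]
    exact div_self (Nat.cast_ne_zero.2 Nat.card_pos.ne')
  | insert v T hv ih =>
    rw [coe_insert, isIndepSet_iff, Set.pairwise_insert_of_notMem (mem_coe.not.2 hv)] at hT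
    rw [choiceProb_insert_subset_out hv fun u hu => (hT.2 u hu).2, ih hT.1, prod_insert hv]

end EdgeChoice

/-- For any subset `S` of the vertices of a graph `G` of maximum degree `x`,
the probability that `S ⊆ Out(E)` is at most `(1 - 2^{-x})^{|S|/(x+1)}`. -/
theorem prob_subset_out_le {V : Type} [Fintype V] [DecidableEq V] (G : SimpleGraph V)
    [DecidableRel G.Adj] (S : Finset V) :
    choiceProb G (fun f => ∀ v ∈ S, ∃ e : G.edgeSet, f.1 e = v) ≤
      (1 - (2 : ℝ) ^ (-(G.maxDegree : ℝ))) ^ ((S.card : ℝ) / ((G.maxDegree : ℝ) + 1)) := by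
  obtain ⟨T, hTS, hT, hcard⟩ := G.exists_isIndepSet_subset_card_le S
  have hfactor (n : ℕ) : 0 ≤ 1 - (2 ^ n : ℝ)⁻¹ :=
    sub_nonneg.2 (inv_le_one_of_one_le₀ (one_le_pow₀ one_le_two))
  calc choiceProb G (fun f => ↑S ⊆ f.out)
      ≤ choiceProb G (fun f => ↑T ⊆ f.out) :=
        EdgeChoice.choiceProb_mono fun f hS => (coe_subset.2 hTS).trans hS
    _ = ∏ v ∈ T, (1 - (2 ^ G.degree v : ℝ)⁻¹) :=
        EdgeChoice.choiceProb_subset_out_of_isIndepSet hT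
    _ ≤ (1 - (2 ^ G.maxDegree : ℝ)⁻¹) ^ #T := by
      refine (prod_le_prod (fun v _ => hfactor _) fun v _ => ?_).trans_eq (prod_const _)
      gcongr
      exacts [one_le_two, G.degree_le_maxDegree v]
    _ ≤ (1 - (2 ^ G.maxDegree : ℝ)⁻¹) ^ ((#S : ℝ) / (G.maxDegree + 1)) := by
      rw [← Real.rpow_natCast]
      refine Real.rpow_le_rpow_of_exponent_ge' (hfactor _) (by simp) (by positivity) ?_
      rw [div_le_iff₀ (by positivity)]
      exact_mod_cast hcard
    _ = _ := by rw [Real.rpow_neg zero_le_two, Real.rpow_natCast]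
end

section
/- Any family of fewer than (1-2^{-x})^{-t/(x+1)} subsets of V(H), each of size at least t, fails to cover the set of all vertex covers of a graph H of maximum degree x; that is, there exists a vertex cover T of H that contains no member of the family. -/
/-!
Let every edge choose one of its endpoints independently and uniformly at random; the chosen
endpoints form a vertex cover. A vertex `v` stays outside it with probability
`2^{-deg v} ≥ 2^{-x}`, and for the vertices of an independent set these events are independent,
since they depend on disjoint sets of edges. A set `a` with `|a| ≥ t` contains, greedily, an
independent set of size at least `t/(x+1)`, so `a` lies in the random cover with probability at
most `(1-2^{-x})^{t/(x+1)}`. By the union bound, if the family has fewer than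
`(1-2^{-x})^{-t/(x+1)}` members, with positive probability the random cover contains none of them.
-/

open SimpleGraph

def IsVertexCoverF {V : Type} (G : SimpleGraph V) (C : Finset V) : Prop :=
  ∀ ⦃u v : V⦄, G.Adj u v → u ∈ C ∨ v ∈ C

open Finset

section Density

variable {α β : Type*} [Fintype α] [Fintype β]

open scoped Classical in
/-- The probability of `P` for a uniformly random function `α → β`. -/
noncomputable def density (P : (α → β) → Prop) : ℝ :=
  #{f | P f} / Fintype.card (α → β)

lemma density_eq [DecidableEq α] (P : (α → β) → Prop) [DecidablePred P] :
    density P = #{f | P f} / Fintype.card (α → β) := by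
  unfold density
  congr <;> exact Subsingleton.elim _ _

lemma density_nonneg (P : (α → β) → Prop) : 0 ≤ density P := by
  unfold density
  positivity

lemma density_mono {P Q : (α → β) → Prop} (h : ∀ f, P f → Q f) : density P ≤ density Q := by
  classical
  rw [density_eq, density_eq]
  gcongr with f
  exact h f

variable [Nonempty β]

lemma density_not (P : (α → β) → Prop) : density (fun f => ¬ P f) = 1 - density P := by
  classical
  have hcard : (Fintype.card (α → β) : ℝ) ≠ 0 := by positivity
  have hsplit := card_filter_add_card_filter_not (s := univ) P
  rw [card_univ] at hsplit
  rw [density_eq, density_eq, eq_sub_iff_add_eq, ← add_div, div_eq_one_iff_eq hcard]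
  exact_mod_cast (add_comm _ _).trans hsplit

lemma density_eqOn (s : Finset α) (g : α → β) :
    density (fun f => Set.EqOn f g s) = ((Fintype.card β : ℝ) ^ #s)⁻¹ := by
  classical
  have hfilter : ({f | Set.EqOn f g s} : Finset (α → β))
      = Fintype.piFinset fun e => if e ∈ s then {g e} else univ := by
    ext f
    simp only [mem_filter, mem_univ, true_and, Fintype.mem_piFinset]
    refine ⟨fun h e => ?_, fun h e he => ?_⟩
    · split_ifs with he
      · simp [h he]
      · simp
    · simpa [if_pos (mem_coe.1 he)] using h e
  have hcompl : #{e | e ∉ s} = #sᶜ := by congr 1; ext; simp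
  have hβ : (Fintype.card β : ℝ) ≠ 0 := by positivity
  rw [density_eq, hfilter, Fintype.card_piFinset, Fintype.card_fun, ← card_add_card_compl s]
  simp only [apply_ite card, card_singleton, card_univ, prod_ite, prod_const_one, prod_const,
    one_mul, hcompl]
  push_cast
  rw [pow_add]
  field_simp

/-- Events determined by disjoint sets of coordinates are independent. -/
lemma density_and_le (s : Finset α) {P Q : (α → β) → Prop}
    (hP : ∀ f g, Set.EqOn f g s → P f → P g) (hQ : ∀ f g, Set.EqOn f g (↑s)ᶜ → Q f → Q g) :
    density (fun f => P f ∧ Q f) ≤ density P * density Q := by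
  classical
  have key : #(({f | P f ∧ Q f} : Finset _) ×ˢ (univ : Finset (α → β)))
      ≤ #(({f | P f} : Finset _) ×ˢ ({f | Q f} : Finset _)) := by
    refine card_le_card_of_injOn (fun p => (s.piecewise p.1 p.2, s.piecewise p.2 p.1)) ?_ ?_
    · rintro ⟨f, g⟩ hfg
      simp only [coe_product, Set.mem_prod, coe_filter, mem_univ, true_and] at hfg ⊢
      refine ⟨hP f _ (fun e he => ?_) hfg.1.1, hQ f _ (fun e he => ?_) hfg.1.2⟩
      · rw [piecewise_eq_of_mem _ _ _ he]
      · rw [piecewise_eq_of_notMem _ _ _ he]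
    · rintro ⟨f, g⟩ - ⟨f', g'⟩ - h
      simp only [Prod.mk.injEq, funext_iff] at h ⊢
      constructor <;> intro e <;> by_cases he : e ∈ s
      all_goals
        have h1 := h.1 e
        have h2 := h.2 e
        simp_all
  rw [card_product, card_product, card_univ] at key
  have hcard : (0 : ℝ) < Fintype.card (α → β) := by positivity
  have keyR : (#{f | P f ∧ Q f} : ℝ) * Fintype.card (α → β) ≤ #{f | P f} * #{f | Q f} := by
    exact_mod_cast key
  rw [density_eq, density_eq, density_eq, div_mul_div_comm, div_le_div_iff₀ hcard (by positivity)]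
  nlinarith

lemma one_le_sum_density {ι : Type*} (A : Finset ι) (P : ι → (α → β) → Prop)
    (h : ∀ f, ∃ i ∈ A, P i f) : 1 ≤ ∑ i ∈ A, density (P i) := by
  classical
  have hcover : (univ : Finset (α → β)) ⊆ A.biUnion fun i => {f | P i f} := by
    intro f _
    obtain ⟨i, hi, hf⟩ := h f
    exact mem_biUnion.2 ⟨i, hi, mem_filter.2 ⟨mem_univ f, hf⟩⟩
  have hcount : Fintype.card (α → β) ≤ ∑ i ∈ A, #{f | P i f} :=
    (card_le_card hcover).trans card_biUnion_le
  simp only [density_eq]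
  rw [← sum_div, le_div_iff₀ (by positivity), one_mul]
  exact_mod_cast hcount

end Density

lemma one_sub_inv_two_pow_nonneg (n : ℕ) : 0 ≤ 1 - ((2 : ℝ) ^ n)⁻¹ :=
  sub_nonneg.2 (inv_le_one_of_one_le₀ (one_le_pow₀ one_le_two))

lemma mul_rpow_lt_one_of_lt_rpow_neg {n p s : ℝ} (hp : 0 ≤ p) (hn : n < p ^ (-s)) :
    n * p ^ s < 1 := by
  rcases hp.eq_or_lt with rfl | hp
  · rcases eq_or_ne s 0 with rfl | hs
    · simpa using hn
    · simp [Real.zero_rpow hs]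
  · calc n * p ^ s < p ^ (-s) * p ^ s := by gcongr
      _ = 1 := by rw [Real.rpow_neg hp.le, inv_mul_cancel₀ (Real.rpow_pos_of_pos hp s).ne']

namespace Sym2

variable {V : Type*}

noncomputable def pick (e : Sym2 V) (b : Bool) : V := if b then e.out.1 else e.out.2

lemma pick_mem (e : Sym2 V) (b : Bool) : e.pick b ∈ e := by
  cases b
  · exact e.out_snd_mem
  · exact e.out_fst_mem

lemma exists_pick_ne {e : Sym2 V} (he : ¬ e.IsDiag) (v : V) : ∃ b, e.pick b ≠ v := by
  have hne : e.out.1 ≠ e.out.2 := fun h =>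
    he (by rw [← (e.out_eq : s(e.out.1, e.out.2) = e)]; exact Sym2.mk_isDiag_iff.2 h)
  by_cases h : e.out.1 = v
  · exact ⟨false, by simpa [pick, h] using hne.symm⟩
  · exact ⟨true, by simpa [pick] using h⟩

end Sym2

namespace SimpleGraph

variable {V : Type} [Fintype V] [DecidableEq V] (H : SimpleGraph V) [DecidableRel H.Adj]

/-- Every edge `e` chooses its endpoint `e.pick (f e)`. The choices are coded by one bit for each
element of `Sym2 V`, bits of non-edges being ignored, so that the sample space is a full function
space. -/
noncomputable def choiceCover (f : Sym2 V → Bool) : Finset V :=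
  H.edgeFinset.image fun e => e.pick (f e)

lemma isVertexCoverF_choiceCover (f : Sym2 V → Bool) : IsVertexCoverF H (H.choiceCover f) := by
  intro u v huv
  have hmem : s(u, v).pick (f s(u, v)) ∈ H.choiceCover f :=
    mem_image_of_mem _ (by rwa [mem_edgeFinset, mem_edgeSet])
  rcases Sym2.mem_iff.1 (s(u, v).pick_mem (f s(u, v))) with h | h
  · exact .inl (h ▸ hmem)
  · exact .inr (h ▸ hmem)

lemma mem_choiceCover {f : Sym2 V → Bool} {v : V} :
    v ∈ H.choiceCover f ↔ ∃ e ∈ H.incidenceFinset v, e.pick (f e) = v := by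
  simp only [choiceCover, mem_image, mem_edgeFinset, mem_incidenceFinset, incidenceSet]
  constructor
  · rintro ⟨e, he, rfl⟩
    exact ⟨e, ⟨he, e.pick_mem _⟩, rfl⟩
  · rintro ⟨e, ⟨he, -⟩, hv⟩
    exact ⟨e, he, hv⟩

lemma mem_choiceCover_of_eqOn {f g : Sym2 V → Bool} {v : V}
    (hfg : Set.EqOn f g (H.incidenceFinset v)) (hv : v ∈ H.choiceCover f) :
    v ∈ H.choiceCover g := by
  obtain ⟨e, he, hev⟩ := H.mem_choiceCover.1 hv
  exact H.mem_choiceCover.2 ⟨e, he, hfg (mem_coe.2 he) ▸ hev⟩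

lemma density_mem_choiceCover_le (v : V) :
    density (fun f => v ∈ H.choiceCover f) ≤ 1 - ((2 : ℝ) ^ H.maxDegree)⁻¹ := by
  choose! g hg using fun (e : Sym2 V) (he : ¬ e.IsDiag) => Sym2.exists_pick_ne he v
  have havoid : ∀ f, Set.EqOn f g (H.incidenceFinset v) → v ∉ H.choiceCover f := by
    intro f hfg hv
    obtain ⟨e, he, hev⟩ := H.mem_choiceCover.1 (H.mem_choiceCover_of_eqOn hfg hv)
    exact hg e (H.not_isDiag_of_mem_edgeSet ((H.mem_incidenceFinset v e).1 he).1) hev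
  have hbad := density_mono havoid
  rw [density_eqOn, Fintype.card_bool, Nat.cast_ofNat, card_incidenceFinset_eq_degree] at hbad
  have hdeg : ((2 : ℝ) ^ H.maxDegree)⁻¹ ≤ ((2 : ℝ) ^ H.degree v)⁻¹ := by
    gcongr
    · norm_num
    · exact H.degree_le_maxDegree v
  linarith [density_not fun f => v ∈ H.choiceCover f]

lemma density_forall_mem_choiceCover_le {b : Finset V} (hb : H.IsIndepSet b) :
    density (fun f => ∀ v ∈ b, v ∈ H.choiceCover f) ≤ (1 - ((2 : ℝ) ^ H.maxDegree)⁻¹) ^ #b := by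
  induction b using Finset.induction_on with
  | empty => simp [density_eq]
  | @insert v b hvb ih =>
    rw [coe_insert, isIndepSet_iff, Set.pairwise_insert] at hb
    have hsub : ∀ u ∈ b, (H.incidenceFinset u : Set (Sym2 V)) ⊆ (H.incidenceFinset v)ᶜ := by
      intro u hu
      have hne := ne_of_mem_of_not_mem hu hvb
      rw [coe_incidenceFinset, coe_incidenceFinset, Set.subset_compl_iff_disjoint_right,
        Set.disjoint_iff_inter_eq_empty]
      exact H.incidenceSet_inter_incidenceSet_of_not_adj (hb.2 u hu hne.symm).2 hne
    have hindep := density_and_le (H.incidenceFinset v)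
      (P := fun f => v ∈ H.choiceCover f) (Q := fun f => ∀ u ∈ b, u ∈ H.choiceCover f)
      (fun f g hfg => H.mem_choiceCover_of_eqOn hfg)
      (fun f g hfg hf u hu => H.mem_choiceCover_of_eqOn (hfg.mono (hsub u hu)) (hf u hu))
    simp only [forall_mem_insert, card_insert_of_notMem hvb, pow_succ']
    exact hindep.trans (mul_le_mul (H.density_mem_choiceCover_le v) (ih hb.1)
      (density_nonneg _) (one_sub_inv_two_pow_nonneg _))

lemma exists_isIndepSet_subset_card_le_s4 (a : Finset V) :
    ∃ b ⊆ a, H.IsIndepSet b ∧ #a ≤ (H.maxDegree + 1) * #b := by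
  obtain ⟨b, -, hmax⟩ := Finite.exists_le_maximal
    (p := fun b : Finset V => b ⊆ a ∧ H.IsIndepSet b) (a := ∅) ⟨empty_subset a, by simp⟩
  refine ⟨b, hmax.prop.1, hmax.prop.2, ?_⟩
  have hdom : a ⊆ b.biUnion fun v => insert v (H.neighborFinset v) := by
    intro u hu
    by_cases hub : u ∈ b
    · exact mem_biUnion.2 ⟨u, hub, mem_insert_self _ _⟩
    obtain ⟨v, hv, hadj⟩ : ∃ v ∈ b, H.Adj u v := by
      by_contra! hnone
      have hindep : H.IsIndepSet ↑(insert u b) := by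
        rw [coe_insert, isIndepSet_iff, Set.pairwise_insert]
        exact ⟨hmax.prop.2, fun w hw _ => ⟨hnone w hw, fun h => hnone w hw h.symm⟩⟩
      have := hmax.eq_of_le ⟨insert_subset hu hmax.prop.1, hindep⟩ (subset_insert u b)
      exact hub (this ▸ mem_insert_self u b)
    exact mem_biUnion.2 ⟨v, hv, mem_insert_of_mem ((H.mem_neighborFinset v u).2 hadj.symm)⟩
  calc #a ≤ ∑ v ∈ b, #(insert v (H.neighborFinset v)) :=
        (card_le_card hdom).trans card_biUnion_le
    _ ≤ ∑ v ∈ b, (H.maxDegree + 1) := sum_le_sum fun v _ => (card_insert_le _ _).trans <| by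
        rw [card_neighborFinset_eq_degree]
        exact Nat.add_le_add_right (H.degree_le_maxDegree v) 1
    _ = (H.maxDegree + 1) * #b := by rw [sum_const, smul_eq_mul, mul_comm]

lemma density_subset_choiceCover_le {a : Finset V} {t : ℕ} (ht : t ≤ #a) :
    density (fun f => a ⊆ H.choiceCover f)
      ≤ (1 - ((2 : ℝ) ^ H.maxDegree)⁻¹) ^ ((t : ℝ) / (H.maxDegree + 1)) := by
  obtain ⟨b, hba, hb, hcard⟩ := H.exists_isIndepSet_subset_card_le_s4 a
  have hexp : (t : ℝ) / (H.maxDegree + 1) ≤ #b := by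
    rw [div_le_iff₀ (by positivity)]
    exact_mod_cast ht.trans (hcard.trans_eq (mul_comm _ _))
  calc density (fun f => a ⊆ H.choiceCover f)
      ≤ density (fun f => ∀ v ∈ b, v ∈ H.choiceCover f) := density_mono fun f hf v hv => hf (hba hv)
    _ ≤ (1 - ((2 : ℝ) ^ H.maxDegree)⁻¹) ^ #b := H.density_forall_mem_choiceCover_le hb
    _ ≤ _ := by
      rw [← Real.rpow_natCast]
      exact Real.rpow_le_rpow_of_exponent_ge' (one_sub_inv_two_pow_nonneg _)
        (sub_le_self _ (by positivity)) (by positivity) hexp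

end SimpleGraph

/-- Any family of fewer than `(1-2^{-x})^{-t/(x+1)}` subsets of `V(H)`, each of size at
least `t`, fails to cover the set of all vertex covers of a graph `H` of maximum degree
`x`: some vertex cover `T` of `H` contains no member of the family. -/
theorem small_family_fails_to_cover {V : Type} [Fintype V] [DecidableEq V]
    (H : SimpleGraph V) [DecidableRel H.Adj] (t : ℕ) (A : Finset (Finset V))
    (hA : ∀ a ∈ A, t ≤ a.card)
    (hcard : (A.card : ℝ) <
      (1 - (2 : ℝ) ^ (-(H.maxDegree : ℝ))) ^ (-(t : ℝ) / ((H.maxDegree : ℝ) + 1))) :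
    ∃ T : Finset V, IsVertexCoverF H T ∧ ∀ a ∈ A, ¬ a ⊆ T := by
  rw [Real.rpow_neg zero_le_two, Real.rpow_natCast, neg_div] at hcard
  set p : ℝ := 1 - ((2 : ℝ) ^ H.maxDegree)⁻¹
  by_contra! hcovers
  have hunion := one_le_sum_density A (fun a f => a ⊆ H.choiceCover f)
    fun f => hcovers _ (H.isVertexCoverF_choiceCover f)
  have hsum : ∑ a ∈ A, density (fun f => a ⊆ H.choiceCover f)
      ≤ #A * p ^ ((t : ℝ) / (H.maxDegree + 1)) := by
    rw [← nsmul_eq_mul]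
    exact sum_le_card_nsmul _ _ _ fun a ha => H.density_subset_choiceCover_le (hA a ha)
  linarith [mul_rpow_lt_one_of_lt_rpow_neg (one_sub_inv_two_pow_nonneg _) hcard]
end

section
/- Let T be a tree and H a graph, and let T(H) denote the graph obtained by taking a disjoint copy of H for each vertex of T and, for each edge {t₁,t₂} of T, joining each vertex of the copy at t₁ to the corresponding (same-labelled) vertex of the copy at t₂. Suppose V(T(H)) is partitioned into two classes, and suppose L ⊆ V(H) with |L| = t is such that there exist two copies H₁ and H₂ of H for which, for every u ∈ L, the copies of u in H₁ and H₂ lie in distinct partition classes. Then T(H) has a matching of size t all of whose edges have their two ends in different partition classes. -/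
open SimpleGraph

/-- There is a matching of size `t` in `G` all of whose edges have one end in `A` and the
other end outside `A`. -/
def HasCutMatching {V : Type} (G : SimpleGraph V) (A : Set V) (t : ℕ) : Prop :=
  ∃ a b : Fin t → V, Function.Injective a ∧ Function.Injective b ∧
    ∀ i, a i ∈ A ∧ b i ∉ A ∧ G.Adj (a i) (b i)

lemma walk_cross {VT : Type} {T : SimpleGraph VT} {P : VT → Prop} :
    ∀ {x y : VT}, T.Walk x y → P x → ¬ P y →
      ∃ s s', T.Adj s s' ∧ P s ∧ ¬ P s' := by
  intro x y w
  induction w with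
  | nil => intro h h'; exact absurd h h'
  | @ cons a b c h p ih =>
    intro ha hc
    by_cases hb : P b
    · exact ih hb hc
    · exact ⟨a, b, h, ha, hb⟩

/-- Let `T` be a tree and `H` a graph, and let `T □ H` be the graph obtained by replacing
each vertex of `T` with a copy of `H`, joining same-labelled vertices of copies at
adjacent tree nodes. Suppose `V(T □ H)` is partitioned into a class `A` and its
complement, and `L ⊆ V(H)` with `|L| = t` is such that there are two copies (at `t₁` and
`t₂`) for which, for every `u ∈ L`, the copies of `u` lie in distinct partition classes.
Then `T □ H` has a matching of size `t` whose edges each join the two partition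
classes. -/
theorem matching_on_the_way {VT VH : Type} (T : SimpleGraph VT) (H : SimpleGraph VH)
    (hT : T.IsTree) (A : Set (VT × VH)) (L : Finset VH) (t : ℕ) (hL : L.card = t)
    (t₁ t₂ : VT) (h12 : ∀ u ∈ L, ((t₁, u) ∈ A ↔ (t₂, u) ∉ A)) :
    HasCutMatching (T □ H) A t := by
  classical
  have hconn := hT.isConnected
  have key : ∀ u ∈ L, ∃ s s', T.Adj s s' ∧ (s, u) ∈ A ∧ (s', u) ∉ A := by
    intro u hu
    obtain ⟨w⟩ := hconn.preconnected t₁ t₂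
    by_cases h1 : (t₁, u) ∈ A
    · exact walk_cross w h1 (((h12 u hu).mp h1))
    · have h2 : (t₂, u) ∈ A := by
        by_contra h2
        exact h1 ((h12 u hu).mpr h2)
      exact walk_cross w.reverse h2 h1
  let e := (L.equivFinOfCardEq hL).symm
  choose s s' hadj hA hA' using key
  refine ⟨fun i => (s (e i) (e i).2, (e i : VH)),
          fun i => (s' (e i) (e i).2, (e i : VH)), ?_, ?_, ?_⟩
  · intro i j hij
    have : ((e i : VH)) = (e j : VH) := congrArg Prod.snd hij
    exact e.injective (Subtype.ext this)
  · intro i j hij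
    have : ((e i : VH)) = (e j : VH) := congrArg Prod.snd hij
    exact e.injective (Subtype.ext this)
  · intro i
    refine ⟨hA _ _, hA' _ _, ?_⟩
    exact SimpleGraph.boxProd_adj.mpr (Or.inl ⟨hadj _ _, rfl⟩)
end

section
/- Let T be a tree with at least p vertices and H a connected graph with at least 2p vertices. If V(T(H)) is partitioned into two classes V₁, V₂ each of size at least p², then T(H) has a matching of size p whose edges each have one end in V₁ and the other in V₂. -/
open SimpleGraph

/-- Mapping a walk through a graph hom and looking at a boundary dart: a connected graph
mapped into `Gr` hitting both `A` and `Aᶜ` yields a crossing edge within the image. -/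
lemma exists_cross_edge {V W : Type} {G : SimpleGraph V} {Gr : SimpleGraph W}
    (hG : G.Connected) (f : V → W) (hf : ∀ a b, G.Adj a b → Gr.Adj (f a) (f b))
    (A : Set W) {u v : V} (hu : f u ∈ A) (hv : f v ∉ A) :
    ∃ a b, a ∈ Set.range f ∧ b ∈ Set.range f ∧ a ∈ A ∧ b ∉ A ∧ Gr.Adj a b := by
  obtain ⟨w⟩ := hG.preconnected u v
  let φ : G →g Gr := ⟨f, fun h => hf _ _ h⟩
  obtain ⟨d, hd, hdf, hds⟩ := (w.map φ).exists_boundary_dart A hu hv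
  have h1 := SimpleGraph.Walk.dart_fst_mem_support_of_mem_darts _ hd
  have h2 := SimpleGraph.Walk.dart_snd_mem_support_of_mem_darts _ hd
  rw [SimpleGraph.Walk.support_map, List.mem_map] at h1 h2
  obtain ⟨x, -, hx⟩ := h1
  obtain ⟨y, -, hy⟩ := h2
  exact ⟨d.fst, d.snd, ⟨x, hx⟩, ⟨y, hy⟩, hdf, hds, d.adj⟩

lemma exists_inj_of_ncard {α : Type} [Fintype α] {S : Set α} {p : ℕ} (h : p ≤ S.ncard) :
    ∃ g : Fin p → α, Function.Injective g ∧ ∀ i, g i ∈ S := by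
  classical
  rw [Set.ncard_eq_toFinset_card'] at h
  obtain ⟨t, hts, htc⟩ := Finset.exists_subset_card_eq h
  refine ⟨fun i => (t.equivFin.symm (Fin.cast htc.symm i) : α), ?_, ?_⟩
  · intro i j hij
    have h2 : t.equivFin.symm (Fin.cast htc.symm i) = t.equivFin.symm (Fin.cast htc.symm j) :=
      Subtype.ext hij
    simpa [Fin.ext_iff] using congrArg Fin.val (t.equivFin.symm.injective h2)
  · intro i
    have := (t.equivFin.symm (Fin.cast htc.symm i)).2
    exact Set.mem_toFinset.mp (hts this)

/-- Let `T` be a tree with at least `p` vertices and `H` a connected graph with at least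
`2p` vertices. If `V(T □ H)` is partitioned into two classes `A` and `Aᶜ` each of size at
least `p²`, then `T □ H` has a matching of size `p` whose edges each join the two
partition classes. -/
theorem matching_min_case {VT VH : Type} [Fintype VT] [Fintype VH]
    (T : SimpleGraph VT) (H : SimpleGraph VH) (hT : T.IsTree) (hH : H.Connected)
    (p : ℕ) (hpT : p ≤ Fintype.card VT) (hpH : 2 * p ≤ Fintype.card VH)
    (A : Set (VT × VH)) (hA1 : p ^ 2 ≤ A.ncard) (hA2 : p ^ 2 ≤ Aᶜ.ncard) :
    HasCutMatching (T □ H) A p := by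
  classical
  rcases Nat.eq_zero_or_pos p with hp0 | hp
  · subst hp0
    exact ⟨fun i => i.elim0, fun i => i.elim0, fun i => i.elim0, fun i => i.elim0,
      fun i => i.elim0⟩
  -- mixed columns (copies of T) and mixed rows (copies of H)
  set MC : Set VH := {h | (∃ t, (t, h) ∈ A) ∧ ∃ t, (t, h) ∉ A} with hMCdef
  set MR : Set VT := {t | (∃ h, (t, h) ∈ A) ∧ ∃ h, (t, h) ∉ A} with hMRdef
  by_cases hMC : p ≤ MC.ncard
  · -- pick a crossing edge in each of `p` mixed columns
    obtain ⟨g, hg, hgm⟩ := exists_inj_of_ncard hMC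
    have spec : ∀ i : Fin p, ∃ ab : (VT × VH) × (VT × VH),
        ab.1.2 = g i ∧ ab.2.2 = g i ∧ ab.1 ∈ A ∧ ab.2 ∉ A ∧ (T □ H).Adj ab.1 ab.2 := by
      intro i
      obtain ⟨⟨t₁, ht₁⟩, ⟨t₂, ht₂⟩⟩ := hgm i
      obtain ⟨a, b, ⟨x, hx⟩, ⟨y, hy⟩, haA, hbA, hab⟩ :=
        exists_cross_edge hT.isConnected (fun t => (t, g i))
          (fun s t hst => (SimpleGraph.boxProd_adj).mpr (Or.inl ⟨hst, rfl⟩)) A ht₁ ht₂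
      exact ⟨(a, b), by rw [← hx], by rw [← hy], haA, hbA, hab⟩
    choose e h1 h2 h3 h4 h5 using spec
    refine ⟨fun i => (e i).1, fun i => (e i).2, ?_, ?_, fun i => ⟨h3 i, h4 i, h5 i⟩⟩
    · intro i j hij
      apply hg; rw [← h1 i, ← h1 j]; exact congrArg Prod.snd hij
    · intro i j hij
      apply hg; rw [← h2 i, ← h2 j]; exact congrArg Prod.snd hij
  by_cases hMR : p ≤ MR.ncard
  · -- pick a crossing edge in each of `p` mixed rows
    obtain ⟨g, hg, hgm⟩ := exists_inj_of_ncard hMR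
    have spec : ∀ i : Fin p, ∃ ab : (VT × VH) × (VT × VH),
        ab.1.1 = g i ∧ ab.2.1 = g i ∧ ab.1 ∈ A ∧ ab.2 ∉ A ∧ (T □ H).Adj ab.1 ab.2 := by
      intro i
      obtain ⟨⟨u₁, hu₁⟩, ⟨u₂, hu₂⟩⟩ := hgm i
      obtain ⟨a, b, ⟨x, hx⟩, ⟨y, hy⟩, haA, hbA, hab⟩ :=
        exists_cross_edge hH (fun u => (g i, u))
          (fun s u hsu => (SimpleGraph.boxProd_adj).mpr (Or.inr ⟨hsu, rfl⟩)) A hu₁ hu₂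
      exact ⟨(a, b), by rw [← hx], by rw [← hy], haA, hbA, hab⟩
    choose e h1 h2 h3 h4 h5 using spec
    refine ⟨fun i => (e i).1, fun i => (e i).2, ?_, ?_, fun i => ⟨h3 i, h4 i, h5 i⟩⟩
    · intro i j hij
      apply hg; rw [← h1 i, ← h1 j]; exact congrArg Prod.fst hij
    · intro i j hij
      apply hg; rw [← h2 i, ← h2 j]; exact congrArg Prod.fst hij
  -- contradiction case: few mixed rows and few mixed columns
  exfalso
  push_neg at hMC hMR
  -- a pure row exists
  have hMRne : MR ≠ Set.univ := by
    intro h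
    rw [h, Set.ncard_univ, Nat.card_eq_fintype_card] at hMR
    omega
  obtain ⟨t₀, ht₀⟩ : ∃ t₀, t₀ ∉ MR := by
    by_contra hc
    push_neg at hc
    exact hMRne (Set.eq_univ_of_forall hc)
  have hMCne : MC ≠ Set.univ := by
    intro h
    rw [h, Set.ncard_univ, Nat.card_eq_fintype_card] at hMC
    omega
  obtain ⟨h₀, hh₀⟩ : ∃ h₀, h₀ ∉ MC := by
    by_contra hc
    push_neg at hc
    exact hMCne (Set.eq_univ_of_forall hc)
  -- key size bound
  have hbound : ∀ (B : Set (VT × VH)), B ⊆ MR ×ˢ MC → ¬ (p ^ 2 ≤ B.ncard) := by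
    intro B hB hle
    have h1 : B.ncard ≤ (MR ×ˢ MC).ncard := Set.ncard_le_ncard hB (Set.toFinite _)
    have h2 : (MR ×ˢ MC).ncard = MR.ncard * MC.ncard := by
      simp [Set.ncard_eq_toFinset_card', Set.toFinset_prod]
    have : MR.ncard * MC.ncard < p * p := Nat.mul_lt_mul'' hMR hMC
    have := hle.trans h1
    rw [h2] at this
    nlinarith
  simp only [hMRdef, hMCdef, Set.mem_setOf_eq, not_and_or, not_exists, not_not] at ht₀ hh₀
  rcases ht₀ with hrow | hrow
  · -- row t₀ is pure Aᶜ : every vertex of A has mixed row and mixed column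
    -- column h₀ is then pure Aᶜ too
    have hcol : ∀ t, (t, h₀) ∉ A := by
      rcases hh₀ with h | h
      · exact h
      · exact fun t => absurd (h t₀) (hrow h₀)
    refine hbound A ?_ hA1
    rintro ⟨t, h⟩ hv
    exact ⟨⟨⟨h, hv⟩, ⟨h₀, hcol t⟩⟩, ⟨⟨t, hv⟩, ⟨t₀, hrow h⟩⟩⟩
  · -- row t₀ is pure A
    have hcol : ∀ t, (t, h₀) ∈ A := by
      rcases hh₀ with h | h
      · exact fun t => absurd (hrow h₀) (h t₀)
      · exact h
    refine hbound Aᶜ ?_ hA2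
    rintro ⟨t, h⟩ hv
    exact ⟨⟨⟨h₀, hcol t⟩, ⟨h, hv⟩⟩, ⟨⟨t₀, hrow h⟩, ⟨t, hv⟩⟩⟩
end

section
/- Let p ≥ 1 and let H be a connected graph with exactly 2p vertices. Then for any r ≥ ⌈log₂ p⌉, the matching width of T_r(H) is at least (r + 1 - ⌈log₂ p⌉)·p/2, where T_r is the complete binary tree of height r. -/
open SimpleGraph

/-- The matching width of `G`: the minimum over all permutations (orderings) of `V(G)` of
the maximum, over all prefixes, of the size of a largest matching consisting of edges
between the prefix and the rest of the vertices. -/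
noncomputable def matchingWidth {V : Type} [Fintype V] (G : SimpleGraph V) : ℕ :=
  ⨅ σ : Fin (Fintype.card V) ≃ V, ⨆ i : Fin (Fintype.card V + 1),
    sSup {t | HasCutMatching G {v | ((σ.symm v : Fin (Fintype.card V)) : ℕ) < (i : ℕ)} t}

/-- The complete binary tree of height `r`, with `2^(r+1) - 1` vertices in heap
numbering: vertex `i` is adjacent to its children `2i+1` and `2i+2`. -/
def completeBinaryTree (r : ℕ) : SimpleGraph (Fin (2 ^ (r + 1) - 1)) :=
  SimpleGraph.fromRel (fun i j => (j : ℕ) = 2 * (i : ℕ) + 1 ∨ (j : ℕ) = 2 * (i : ℕ) + 2)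

/-! Fix an ordering of `V(T_r □ H)` and put `m = (p - 1)(2p - 1)`. Say that a prefix splits a
set `R` of tree nodes if more than `m` vertices of `R × V(H)` lie inside the prefix and more
than `m` outside. If `R` induces a connected subtree, such a prefix has a cut matching of size
`p` inside `R × V(H)`: either `p` copies `{t} × V(H)` are cut, and connectivity of `H` gives an
`H`-edge across the cut in each; or, counting, some copy lies inside the prefix and another one
outside, and then each of the `2p` fibres `R × {v}` contains a tree edge across the cut.

Let `c = ⌈log₂ p⌉`. By induction on `n`, the subtree of every node of height `c + 2n` is split
by a prefix that has a cut matching of size `p (n + 1)` inside it. A subtree of height `c` has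
at least `2p - 1` nodes, so the prefix containing exactly `m + 1` of its vertices splits it. For
the step, order the three grandchildren `g₁, g₂, g₃` of a node by the length of their prefixes:
at the prefix of `g₂` the subtree minus that of `g₂` contains the subtrees of `g₁` and `g₃`, so
it is split and adds `p` edges to the matching of `g₂`. At the root, `n = ⌊(r - c)/2⌋`. -/

open Finset
open scoped Classical

theorem SimpleGraph.Preconnected.exists_adj_mem_not_mem {α : Type} {G : SimpleGraph α}
    (hG : G.Preconnected) {S : Set α} {x y : α} (hx : x ∈ S) (hy : y ∉ S) :
    ∃ u v, u ∈ S ∧ v ∉ S ∧ G.Adj u v := by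
  obtain ⟨d, -, hd⟩ := (hG x y).some.exists_boundary_dart S hx hy
  exact ⟨d.fst, d.snd, hd.1, hd.2, d.adj⟩

section CutMatching

variable {α : Type} {G : SimpleGraph α} {A : Set α}

def IsCutMatching (G : SimpleGraph α) (A : Set α) (P : Finset (α × α)) : Prop :=
  (∀ e ∈ P, e.1 ∈ A ∧ e.2 ∉ A ∧ G.Adj e.1 e.2) ∧
    Set.InjOn Prod.fst (P : Set (α × α)) ∧ Set.InjOn Prod.snd (P : Set (α × α))

theorem HasCutMatching.mono {s t : ℕ} (hst : s ≤ t) (h : HasCutMatching G A t) :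
    HasCutMatching G A s := by
  obtain ⟨a, b, ha, hb, hab⟩ := h
  exact ⟨a ∘ Fin.castLE hst, b ∘ Fin.castLE hst, ha.comp (Fin.castLE_injective hst),
    hb.comp (Fin.castLE_injective hst), fun i => hab _⟩

theorem IsCutMatching.hasCutMatching {P : Finset (α × α)} (hP : IsCutMatching G A P) :
    HasCutMatching G A #P := by
  obtain ⟨hcut, hfst, hsnd⟩ := hP
  let e := P.equivFin.symm
  have he : Function.Injective fun i => (e i : α × α) := Subtype.val_injective.comp e.injective
  exact ⟨fun i => (e i).1.1, fun i => (e i).1.2,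
    fun i j hij => he (hfst (e i).2 (e j).2 hij), fun i j hij => he (hsnd (e i).2 (e j).2 hij),
    fun i => hcut _ (e i).2⟩

theorem IsCutMatching.union [DecidableEq α] {P Q : Finset (α × α)} {X Y : Finset α}
    (hP : IsCutMatching G A P) (hQ : IsCutMatching G A Q) (hPX : P ⊆ X ×ˢ X) (hQY : Q ⊆ Y ×ˢ Y)
    (hXY : Disjoint X Y) : IsCutMatching G A (P ∪ Q) ∧ #(P ∪ Q) = #P + #Q := by
  have hPQ : Disjoint P Q := (disjoint_product.2 (.inl hXY)).mono hPX hQY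
  have hends : ∀ e ∈ P, ∀ e' ∈ Q, e.1 ≠ e'.1 ∧ e.2 ≠ e'.2 := fun e he e' he' =>
    have hX := mem_product.1 (hPX he)
    have hY := mem_product.1 (hQY he')
    ⟨fun h => disjoint_left.1 hXY hX.1 (h ▸ hY.1), fun h => disjoint_left.1 hXY hX.2 (h ▸ hY.2)⟩
  refine ⟨⟨fun e he => ?_, ?_, ?_⟩, card_union_of_disjoint hPQ⟩
  · rcases mem_union.1 he with he | he
    exacts [hP.1 e he, hQ.1 e he]
  · rw [coe_union, Set.injOn_union (disjoint_coe.2 hPQ)]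
    exact ⟨hP.2.1, hQ.2.1, fun e he e' he' => (hends e he e' he').1⟩
  · rw [coe_union, Set.injOn_union (disjoint_coe.2 hPQ)]
    exact ⟨hP.2.2, hQ.2.2, fun e he e' he' => (hends e he e' he').2⟩

def SplitsAbove (A : Set α) (m : ℕ) (X : Finset α) : Prop :=
  m < #{x ∈ X | x ∈ A} ∧ m < #{x ∈ X | x ∉ A}

theorem SplitsAbove.mono {m : ℕ} {X Y : Finset α} (h : SplitsAbove A m X) (hXY : X ⊆ Y) :
    SplitsAbove A m Y :=
  ⟨h.1.trans_le (card_le_card (filter_subset_filter _ hXY)),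
    h.2.trans_le (card_le_card (filter_subset_filter _ hXY))⟩

theorem exists_isCutMatching_of_forall_exists {ι : Type} {M : Finset ι} {X : Finset α}
    (key₁ key₂ : α → ι)
    (h : ∀ i ∈ M, ∃ e ∈ X ×ˢ X, e.1 ∈ A ∧ e.2 ∉ A ∧ G.Adj e.1 e.2 ∧ key₁ e.1 = i ∧ key₂ e.2 = i) :
    ∃ P, IsCutMatching G A P ∧ P ⊆ X ×ˢ X ∧ #P = #M := by
  choose f hfX hf using h
  set g : M → α × α := fun i => f i.1 i.2
  have hfst : ∀ i j, (g i).1 = (g j).1 → i = j := fun i j hij =>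
    Subtype.ext <| (hf i.1 i.2).2.2.2.1.symm.trans <| (congrArg key₁ hij).trans (hf j.1 j.2).2.2.2.1
  have hsnd : ∀ i j, (g i).2 = (g j).2 → i = j := fun i j hij =>
    Subtype.ext <| (hf i.1 i.2).2.2.2.2.symm.trans <| (congrArg key₂ hij).trans (hf j.1 j.2).2.2.2.2
  refine ⟨M.attach.image g, ⟨fun e he => ?_, ?_, ?_⟩, fun e he => ?_, ?_⟩
  · obtain ⟨i, -, rfl⟩ := mem_image.1 he
    exact ⟨(hf i.1 i.2).1, (hf i.1 i.2).2.1, (hf i.1 i.2).2.2.1⟩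
  · rintro _ he _ he' hee'
    obtain ⟨i, -, rfl⟩ := mem_image.1 he
    obtain ⟨j, -, rfl⟩ := mem_image.1 he'
    rw [hfst i j hee']
  · rintro _ he _ he' hee'
    obtain ⟨i, -, rfl⟩ := mem_image.1 he
    obtain ⟨j, -, rfl⟩ := mem_image.1 he'
    rw [hsnd i j hee']
  · obtain ⟨i, -, rfl⟩ := mem_image.1 he
    exact hfX i.1 i.2
  · rw [card_image_of_injective _ fun i j hij => hfst i j (congrArg Prod.fst hij), card_attach]

end CutMatching

section BoxProd

variable {V W : Type} [Fintype W] {G : SimpleGraph V} {H : SimpleGraph W} {R : Finset V}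
  {A : Set (V × W)}

theorem card_filter_mem_le_of_forall_exists_not_mem {S : Set (V × W)}
    (hS : ∀ t ∈ R, ∃ w, (t, w) ∉ S) :
    #{x ∈ R ×ˢ univ | x ∈ S} ≤
      #{t ∈ R | (∃ w, (t, w) ∈ S) ∧ ∃ w, (t, w) ∉ S} * (Fintype.card W - 1) := by
  rw [card_filter, sum_product,
    ← sum_filter_of_ne (p := fun t => (∃ w, (t, w) ∈ S) ∧ ∃ w, (t, w) ∉ S)]
  · refine sum_le_card_nsmul _ _ _ fun t ht => ?_
    obtain ⟨w, hw⟩ := (mem_filter.1 ht).2.2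
    rw [← card_filter]
    exact Nat.le_sub_one_of_lt (card_lt_univ_of_notMem (x := w) (by simpa using hw))
  · intro t ht hne
    obtain ⟨w, -, hw⟩ := exists_ne_zero_of_sum_ne_zero hne
    exact ⟨⟨w, by by_contra h; simp [h] at hw⟩, hS t ht⟩

theorem exists_isCutMatching_boxProd (hR : (G.induce (R : Set V)).Preconnected)
    (hH : H.Connected) {k : ℕ} (hk : k ≤ Fintype.card W)
    (hA : SplitsAbove A ((k - 1) * (Fintype.card W - 1)) (R ×ˢ univ)) :
    ∃ P, IsCutMatching (G □ H) A P ∧ P ⊆ (R ×ˢ univ) ×ˢ (R ×ˢ univ) ∧ k ≤ #P := by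
  set M := {t ∈ R | (∃ w, (t, w) ∈ A) ∧ ∃ w, (t, w) ∉ A}
  by_cases hM : k ≤ #M
  · obtain ⟨P, hP, hPR, hcard⟩ := exists_isCutMatching_of_forall_exists (G := G □ H) (M := M)
      (X := R ×ˢ univ) Prod.fst Prod.fst fun t ht => by
        obtain ⟨htR, ⟨u, hu⟩, ⟨w, hw⟩⟩ := mem_filter.1 ht
        obtain ⟨a, b, ha, hb, hab⟩ :=
          hH.preconnected.exists_adj_mem_not_mem (S := {v | (t, v) ∈ A}) hu hw
        exact ⟨((t, a), (t, b)), by simp [htR], ha, hb, boxProd_adj.2 (.inr ⟨hab, rfl⟩), rfl, rfl⟩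
    exact ⟨P, hP, hPR, hcard ▸ hM⟩
  have hMk : #M * (Fintype.card W - 1) ≤ (k - 1) * (Fintype.card W - 1) :=
    Nat.mul_le_mul_right _ (by omega)
  obtain ⟨x, hxR, hx⟩ : ∃ x ∈ R, ∀ w, (x, w) ∈ A := by
    by_contra! h
    exact hA.1.not_ge ((card_filter_mem_le_of_forall_exists_not_mem h).trans hMk)
  obtain ⟨y, hyR, hy⟩ : ∃ y ∈ R, ∀ w, (y, w) ∉ A := by
    by_contra! h
    have := card_filter_mem_le_of_forall_exists_not_mem (S := Aᶜ) (by simpa using h)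
    simp only [Set.mem_compl_iff, not_not, and_comm] at this
    exact hA.2.not_ge (this.trans hMk)
  obtain ⟨P, hP, hPR, hcard⟩ := exists_isCutMatching_of_forall_exists (G := G □ H)
    (M := (univ : Finset W)) (X := R ×ˢ univ) Prod.snd Prod.snd fun w _ => by
      obtain ⟨a, b, ha, hb, hab⟩ := hR.exists_adj_mem_not_mem (x := ⟨x, hxR⟩) (y := ⟨y, hyR⟩)
        (S := {v | ((v : V), w) ∈ A}) (hx w) (hy w)
      exact ⟨((a, w), (b, w)), by simp, ha, hb, boxProd_adj.2 (.inl ⟨hab, rfl⟩), rfl, rfl⟩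
  exact ⟨P, hP, hPR, hcard ▸ hk⟩

end BoxProd

theorem Nat.exists_le_eq_of_succ_le_add_one {f : ℕ → ℕ} (hf : ∀ i, f (i + 1) ≤ f i + 1)
    {q : ℕ} (h0 : f 0 ≤ q) : ∀ {N}, q ≤ f N → ∃ i ≤ N, f i = q
  | 0, hN => ⟨0, le_rfl, le_antisymm h0 hN⟩
  | N + 1, hN => by
    by_cases hq : q ≤ f N
    · obtain ⟨i, hi, hfi⟩ := Nat.exists_le_eq_of_succ_le_add_one hf h0 hq
      exact ⟨i, by omega, hfi⟩
    · exact ⟨N + 1, le_rfl, by have := hf N; omega⟩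

section Ordering

variable {α : Type} [Fintype α] (σ : Fin (Fintype.card α) ≃ α)

def orderPrefix (i : ℕ) : Set α := {v | ((σ.symm v : Fin (Fintype.card α)) : ℕ) < i}

theorem le_matchingWidth {G : SimpleGraph α} {t : ℕ}
    (h : ∀ σ, ∃ i ≤ Fintype.card α, HasCutMatching G (orderPrefix σ i) t) :
    t ≤ matchingWidth G := by
  have hbdd : ∀ (A : Set α) s, HasCutMatching G A s → s ≤ Fintype.card α := by
    rintro A s ⟨a, -, ha, -⟩
    simpa using Fintype.card_le_of_injective a ha
  have hzero : ∀ A : Set α, HasCutMatching G A 0 := fun A =>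
    ⟨Fin.elim0, Fin.elim0, fun i => i.elim0, fun i => i.elim0, fun i => i.elim0⟩
  have : Nonempty (Fin (Fintype.card α) ≃ α) := ⟨(Fintype.equivFin α).symm⟩
  refine le_ciInf fun σ => ?_
  obtain ⟨i, hi, hσ⟩ := h σ
  refine (le_csSup ⟨_, fun s => hbdd _ s⟩ hσ).trans (le_ciSup_of_le ?_ ⟨i, by omega⟩ le_rfl)
  exact ⟨Fintype.card α, Set.forall_mem_range.2 fun j => csSup_le ⟨0, hzero _⟩ (hbdd _)⟩

theorem orderPrefix_mono : Monotone (orderPrefix σ) :=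
  fun _ _ hij _ hv => lt_of_lt_of_le hv hij

theorem card_filter_mem_orderPrefix_mono (X : Finset α) :
    Monotone fun i => #{x ∈ X | x ∈ orderPrefix σ i} :=
  fun _ _ hij => card_le_card (monotone_filter_right _ fun _ _ hx => orderPrefix_mono σ hij hx)

theorem card_filter_not_mem_orderPrefix_anti (X : Finset α) :
    Antitone fun i => #{x ∈ X | x ∉ orderPrefix σ i} :=
  fun _ _ hij =>
    card_le_card (monotone_filter_right _ fun _ _ hx h => hx (orderPrefix_mono σ hij h))

theorem exists_card_filter_mem_orderPrefix_eq {X : Finset α} {q : ℕ} (hq : q ≤ #X) :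
    ∃ i ≤ Fintype.card α, #{x ∈ X | x ∈ orderPrefix σ i} = q := by
  refine Nat.exists_le_eq_of_succ_le_add_one (fun i => ?_) (by simp [orderPrefix]) ?_
  · have hsub : {x ∈ X | x ∈ orderPrefix σ (i + 1)} ⊆
        {x ∈ X | x ∈ orderPrefix σ i} ∪ {x ∈ X | ((σ.symm x : Fin _) : ℕ) = i} := by
      intro x hx
      obtain ⟨hxX, hlt⟩ := mem_filter.1 hx
      rcases Nat.lt_succ_iff_lt_or_eq.1 hlt with h | h
      exacts [mem_union_left _ (mem_filter.2 ⟨hxX, h⟩),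
        mem_union_right _ (mem_filter.2 ⟨hxX, h⟩)]
    have hone : #{x ∈ X | ((σ.symm x : Fin _) : ℕ) = i} ≤ 1 := card_le_one.2 fun x hx y hy =>
      σ.symm.injective (Fin.ext (((mem_filter.1 hx).2).trans (mem_filter.1 hy).2.symm))
    exact (card_le_card hsub).trans ((card_union_le _ _).trans (by omega))
  · rwa [filter_true_of_mem fun x _ => show x ∈ orderPrefix σ _ from (σ.symm x).isLt]

def HasSplitPrefixMatching (G : SimpleGraph α) (m : ℕ) (X : Finset α) (s : ℕ) : Prop :=
  ∃ i ≤ Fintype.card α, SplitsAbove (orderPrefix σ i) m X ∧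
    ∃ P, IsCutMatching G (orderPrefix σ i) P ∧ P ⊆ X ×ˢ X ∧ s ≤ #P

end Ordering

-- In heap numbering the `e`-th ancestor of node `j` is `(j + 1) / 2 ^ e - 1`.
def IsHeapAncestor (t j : ℕ) : Prop := ∃ e, (j + 1) / 2 ^ e = t + 1

namespace IsHeapAncestor

theorem refl (t : ℕ) : IsHeapAncestor t t := ⟨0, by simp⟩

theorem trans {a b c : ℕ} : IsHeapAncestor a b → IsHeapAncestor b c → IsHeapAncestor a c
  | ⟨e, he⟩, ⟨f, hf⟩ => ⟨f + e, by rw [pow_add, ← Nat.div_div_eq_div_mul, hf, he]⟩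

theorem le {t j : ℕ} : IsHeapAncestor t j → t ≤ j
  | ⟨e, he⟩ => by have := Nat.div_le_self (j + 1) (2 ^ e); omega

theorem parent {j : ℕ} (hj : 0 < j) : IsHeapAncestor ((j - 1) / 2) j := ⟨1, by omega⟩

theorem parent_of_ne {t j : ℕ} (h : IsHeapAncestor t j) (hne : t ≠ j) :
    IsHeapAncestor t ((j - 1) / 2) := by
  have hj := h.le
  obtain ⟨_ | e, he⟩ := h
  · simp at he; omega
  · refine ⟨e, ?_⟩
    rwa [pow_succ', ← Nat.div_div_eq_div_mul, show (j + 1) / 2 = (j - 1) / 2 + 1 by omega] at he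

theorem total {a b j : ℕ} :
    IsHeapAncestor a j → IsHeapAncestor b j → IsHeapAncestor a b ∨ IsHeapAncestor b a
  | ⟨e, he⟩, ⟨f, hf⟩ => by
    rcases le_total e f with h | h
    · refine .inr ⟨f - e, ?_⟩
      rw [← he, Nat.div_div_eq_div_mul, ← pow_add, Nat.add_sub_cancel' h, hf]
    · refine .inl ⟨e - f, ?_⟩
      rw [← hf, Nat.div_div_eq_div_mul, ← pow_add, Nat.add_sub_cancel' h, he]

theorem not_of_lt_of_lt_two_mul_add_one {u v : ℕ} (huv : u < v) (hv : v < 2 * u + 1) :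
    ¬ IsHeapAncestor u v := by
  rintro ⟨_ | e, he⟩
  · simp at he; omega
  · have : (v + 1) / 2 ^ (e + 1) ≤ (v + 1) / 2 :=
      Nat.div_le_div_left (Nat.le_self_pow (by omega) 2) two_pos
    omega

end IsHeapAncestor

noncomputable def heapSubtree (r t : ℕ) : Finset (Fin (2 ^ (r + 1) - 1)) :=
  {j | IsHeapAncestor t j}

section HeapSubtree

variable {r : ℕ}

theorem mem_heapSubtree {t : ℕ} {j : Fin (2 ^ (r + 1) - 1)} :
    j ∈ heapSubtree r t ↔ IsHeapAncestor t j := by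
  simp [heapSubtree]

theorem heapSubtree_subset {t u : ℕ} (h : IsHeapAncestor t u) :
    heapSubtree r u ⊆ heapSubtree r t := fun _ hj =>
  mem_heapSubtree.2 (h.trans (mem_heapSubtree.1 hj))

theorem disjoint_heapSubtree {u v : ℕ} (huv : u < v) (hv : v < 2 * u + 1) :
    Disjoint (heapSubtree r u) (heapSubtree r v) := by
  refine disjoint_left.2 fun j hu hv' => ?_
  rcases (mem_heapSubtree.1 hu).total (mem_heapSubtree.1 hv') with h | h
  · exact IsHeapAncestor.not_of_lt_of_lt_two_mul_add_one huv hv h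
  · exact absurd h.le (by omega)

-- `2 ^ h * (t + 2) ≤ 2 ^ (r + 1)` says that node `t` has a complete subtree of height `h`.
theorem lt_of_two_pow_mul_le {h t : ℕ} (ht : 2 ^ h * (t + 2) ≤ 2 ^ (r + 1)) :
    t < 2 ^ (r + 1) - 1 := by
  have : t + 2 ≤ 2 ^ h * (t + 2) := Nat.le_mul_of_pos_left _ (by positivity)
  omega

theorem two_pow_le_card_heapSubtree_add_one :
    ∀ {h t : ℕ}, 2 ^ h * (t + 2) ≤ 2 ^ (r + 1) → 2 ^ (h + 1) ≤ #(heapSubtree r t) + 1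
  | 0, t, ht => by
    have := card_pos.2 ⟨⟨t, lt_of_two_pow_mul_le ht⟩, mem_heapSubtree.2 (.refl t)⟩
    omega
  | h + 1, t, ht => by
    have hchild : ∀ c ≤ 2 * t + 2, 2 ^ h * (c + 2) ≤ 2 ^ (r + 1) := fun c hc =>
      le_trans (by rw [pow_succ, mul_assoc]; exact Nat.mul_le_mul_left _ (by omega)) ht
    have hl := two_pow_le_card_heapSubtree_add_one (hchild (2 * t + 1) (by omega))
    have hr := two_pow_le_card_heapSubtree_add_one (hchild (2 * t + 2) le_rfl)
    have hsub : heapSubtree r (2 * t + 1) ∪ heapSubtree r (2 * t + 2) ⊂ heapSubtree r t := by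
      refine (ssubset_iff_of_subset (union_subset (heapSubtree_subset ⟨1, by omega⟩)
        (heapSubtree_subset ⟨1, by omega⟩))).2 ⟨⟨t, lt_of_two_pow_mul_le ht⟩,
          mem_heapSubtree.2 (.refl t), fun h => ?_⟩
      rcases mem_union.1 h with h | h <;>
        exact absurd (mem_heapSubtree.1 h).le (by dsimp only; omega)
    have := card_lt_card hsub
    rw [card_union_of_disjoint (disjoint_heapSubtree (by omega) (by omega))] at this
    rw [pow_succ]
    omega

theorem completeBinaryTree_adj_of_eq_div_two {i j : Fin (2 ^ (r + 1) - 1)} (hj : 0 < (j : ℕ))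
    (hi : (i : ℕ) = ((j : ℕ) - 1) / 2) : (completeBinaryTree r).Adj i j := by
  rw [completeBinaryTree, fromRel_adj]
  exact ⟨fun h => by rw [h] at hi; omega, .inl (by omega)⟩

theorem completeBinaryTree_induce_preconnected {R : Set (Fin (2 ^ (r + 1) - 1))} {t : ℕ}
    (hRt : ∀ j ∈ R, IsHeapAncestor t j)
    (hR : ∀ j ∈ R, (j : ℕ) ≠ t → ∃ i ∈ R, (i : ℕ) = ((j : ℕ) - 1) / 2) :
    ((completeBinaryTree r).induce R).Preconnected := by
  have hroot : ∀ j : R,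
      ∃ t' : R, (t' : ℕ) = t ∧ ((completeBinaryTree r).induce R).Reachable t' j := by
    rintro ⟨j, hj⟩
    induction hn : (j : ℕ) using Nat.strong_induction_on generalizing j with
    | _ n ih =>
      by_cases hjt : (j : ℕ) = t
      · exact ⟨⟨j, hj⟩, hjt, .rfl⟩
      obtain ⟨i, hi, hij⟩ := hR j hj hjt
      have hpos : 0 < (j : ℕ) := by have := (hRt j hj).le; omega
      obtain ⟨t', ht', hreach⟩ := ih i (by omega) i hi rfl
      have hadj : ((completeBinaryTree r).induce R).Adj ⟨i, hi⟩ ⟨j, hj⟩ :=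
        completeBinaryTree_adj_of_eq_div_two hpos hij
      exact ⟨t', ht', hreach.trans hadj.reachable⟩
  intro x y
  obtain ⟨tx, htx, hx⟩ := hroot x
  obtain ⟨ty, hty, hy⟩ := hroot y
  obtain rfl : tx = ty := Subtype.ext (Fin.ext (htx.trans hty.symm))
  exact hx.symm.trans hy

theorem preconnected_induce_heapSubtree (t : ℕ) :
    ((completeBinaryTree r).induce (heapSubtree r t : Set (Fin _))).Preconnected := by
  refine completeBinaryTree_induce_preconnected (t := t) (fun j hj => mem_heapSubtree.1 hj)
    fun j hj hjt => ⟨⟨((j : ℕ) - 1) / 2, by omega⟩, ?_, rfl⟩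
  exact mem_heapSubtree.2 ((mem_heapSubtree.1 hj).parent_of_ne (Ne.symm hjt))

theorem preconnected_induce_heapSubtree_sdiff (t g : ℕ) :
    ((completeBinaryTree r).induce
      ((heapSubtree r t \ heapSubtree r g : Finset _) : Set (Fin _))).Preconnected := by
  refine completeBinaryTree_induce_preconnected (t := t)
    (fun j hj => mem_heapSubtree.1 (mem_sdiff.1 hj).1)
    fun j hj hjt => ⟨⟨((j : ℕ) - 1) / 2, by omega⟩, ?_, rfl⟩
  obtain ⟨hjt', hjg⟩ := mem_sdiff.1 hj
  have hpos : 0 < (j : ℕ) := by have := (mem_heapSubtree.1 hjt').le; omega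
  refine mem_sdiff.2 ⟨mem_heapSubtree.2 ((mem_heapSubtree.1 hjt').parent_of_ne (Ne.symm hjt)),
    fun h => hjg (mem_heapSubtree.2 ((mem_heapSubtree.1 h).trans (.parent hpos)))⟩

end HeapSubtree

section Recursion

variable {W : Type} [Fintype W] {H : SimpleGraph W} {r p : ℕ}
  (σ : Fin (Fintype.card (Fin (2 ^ (r + 1) - 1) × W)) ≃ Fin (2 ^ (r + 1) - 1) × W)

theorem hasSplitPrefixMatching_heapSubtree_base (hH : H.Connected) (hp : 1 ≤ p)
    (hcard : Fintype.card W = 2 * p) {c t : ℕ} (hpc : p ≤ 2 ^ c)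
    (ht : 2 ^ c * (t + 2) ≤ 2 ^ (r + 1)) :
    HasSplitPrefixMatching σ (completeBinaryTree r □ H) ((p - 1) * (Fintype.card W - 1))
      (heapSubtree r t ×ˢ univ) p := by
  set X := heapSubtree r t ×ˢ (univ : Finset W)
  set m := (p - 1) * (Fintype.card W - 1)
  have hX : 2 * (m + 1) ≤ #X := by
    have hD := two_pow_le_card_heapSubtree_add_one ht
    rw [pow_succ] at hD
    simp only [X, m, card_product, card_univ, hcard]
    obtain ⟨q, rfl⟩ : ∃ q, p = q + 1 := ⟨p - 1, by omega⟩
    have : 2 * q + 1 ≤ #(heapSubtree r t) := by omega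
    rw [Nat.add_sub_cancel, show 2 * (q + 1) - 1 = 2 * q + 1 by omega]
    nlinarith
  obtain ⟨i, hi, hin⟩ := exists_card_filter_mem_orderPrefix_eq σ (q := m + 1) (X := X) (by omega)
  have hout := card_filter_add_card_filter_not (s := X) (· ∈ orderPrefix σ i)
  have hsplit : SplitsAbove (orderPrefix σ i) m X := ⟨by omega, by omega⟩
  obtain ⟨P, hP, hPX, hPp⟩ := exists_isCutMatching_boxProd (preconnected_induce_heapSubtree t) hH
    (by omega) hsplit
  exact ⟨i, hi, hsplit, P, hP, hPX, hPp⟩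

theorem isHeapAncestor_grandchild (t : ℕ) (j : Fin 3) : IsHeapAncestor t (4 * t + 3 + j) :=
  ⟨2, by omega⟩

theorem disjoint_heapSubtree_grandchild (t : ℕ) {j j' : Fin 3} (h : j ≠ j') :
    Disjoint (heapSubtree r (4 * t + 3 + j)) (heapSubtree r (4 * t + 3 + j')) := by
  rcases lt_or_gt_of_ne (Fin.val_ne_of_ne h) with h | h
  · exact disjoint_heapSubtree (by omega) (by omega)
  · exact (disjoint_heapSubtree (by omega) (by omega)).symm

theorem HasSplitPrefixMatching.heapSubtree_of_grandchildren (hH : H.Connected)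
    (hp : p ≤ Fintype.card W) {t s : ℕ}
    (h : ∀ j : Fin 3, HasSplitPrefixMatching σ (completeBinaryTree r □ H)
      ((p - 1) * (Fintype.card W - 1)) (heapSubtree r (4 * t + 3 + j) ×ˢ univ) s) :
    HasSplitPrefixMatching σ (completeBinaryTree r □ H) ((p - 1) * (Fintype.card W - 1))
      (heapSubtree r t ×ˢ univ) (s + p) := by
  choose i hi hsplit P hP hPX hPs using h
  set τ := Tuple.sort i
  have hτ : Monotone (i ∘ τ) := Tuple.monotone_sort i
  set D : Fin 3 → Finset (Fin (2 ^ (r + 1) - 1)) := fun j => heapSubtree r (4 * t + 3 + j)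
  set R := heapSubtree r t \ D (τ 1)
  have hDR : ∀ j ≠ τ 1, D j ⊆ R := fun j hj =>
    subset_sdiff.2 ⟨heapSubtree_subset (isHeapAncestor_grandchild t j),
      disjoint_heapSubtree_grandchild t hj⟩
  have hRsplit : SplitsAbove (orderPrefix σ (i (τ 1))) ((p - 1) * (Fintype.card W - 1))
      (R ×ˢ univ) := by
    have hsub : ∀ j ≠ τ 1, D j ×ˢ univ ⊆ R ×ˢ (univ : Finset W) := fun j hj =>
      product_subset_product_left (hDR j hj)
    refine ⟨(hsplit (τ 0)).1.trans_le ?_, (hsplit (τ 2)).2.trans_le ?_⟩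
    · exact (card_filter_mem_orderPrefix_mono σ _ (hτ (by decide))).trans
        (card_le_card (filter_subset_filter _ (hsub _ (τ.injective.ne (by decide)))))
    · exact (card_filter_not_mem_orderPrefix_anti σ _ (hτ (by decide))).trans
        (card_le_card (filter_subset_filter _ (hsub _ (τ.injective.ne (by decide)))))
  obtain ⟨Q, hQ, hQR, hQp⟩ := exists_isCutMatching_boxProd
    (preconnected_induce_heapSubtree_sdiff t (4 * t + 3 + τ 1)) hH hp hRsplit
  obtain ⟨hPQ, hcard⟩ := (hP (τ 1)).union hQ (hPX (τ 1)) hQR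
    (disjoint_product.2 (.inl sdiff_disjoint.symm))
  have hDt : D (τ 1) ⊆ heapSubtree r t := heapSubtree_subset (isHeapAncestor_grandchild t _)
  refine ⟨i (τ 1), hi _, (hsplit _).mono (product_subset_product_left hDt), _, hPQ, ?_, ?_⟩
  · have hX : D (τ 1) ×ˢ univ ⊆ heapSubtree r t ×ˢ (univ : Finset W) :=
      product_subset_product_left hDt
    have hRX : R ×ˢ univ ⊆ heapSubtree r t ×ˢ (univ : Finset W) :=
      product_subset_product_left sdiff_subset
    exact union_subset ((hPX _).trans (product_subset_product hX hX))
      (hQR.trans (product_subset_product hRX hRX))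
  · have := hPs (τ 1)
    omega

theorem hasSplitPrefixMatching_heapSubtree (hH : H.Connected) (hp : 1 ≤ p)
    (hcard : Fintype.card W = 2 * p) {c : ℕ} (hpc : p ≤ 2 ^ c) :
    ∀ (n : ℕ) {t : ℕ}, 2 ^ (c + 2 * n) * (t + 2) ≤ 2 ^ (r + 1) →
      HasSplitPrefixMatching σ (completeBinaryTree r □ H) ((p - 1) * (Fintype.card W - 1))
        (heapSubtree r t ×ˢ univ) (p * (n + 1))
  | 0, t, ht => by simpa using hasSplitPrefixMatching_heapSubtree_base σ hH hp hcard hpc ht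
  | n + 1, t, ht => by
    refine HasSplitPrefixMatching.heapSubtree_of_grandchildren σ hH (by omega) fun j =>
      hasSplitPrefixMatching_heapSubtree hH hp hcard hpc n (le_trans ?_ ht)
    rw [show c + 2 * (n + 1) = c + 2 * n + 2 by ring, pow_add _ _ 2, mul_assoc]
    exact Nat.mul_le_mul_left _ (by omega)

end Recursion

/-- Let `p ≥ 1` and let `H` be a connected graph with exactly `2p` vertices. Then for any
`r ≥ ⌈log₂ p⌉`, the matching width of `T_r □ H` is at least `(r + 1 - ⌈log₂ p⌉)·p/2`,
where `T_r` is the complete binary tree of height `r`. -/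
theorem matchingWidth_binaryTree_lb {VH : Type} [Fintype VH] (H : SimpleGraph VH)
    (hH : H.Connected) (p : ℕ) (hp : 1 ≤ p) (hcard : Fintype.card VH = 2 * p)
    (r : ℕ) (hr : Nat.clog 2 p ≤ r) :
    ((r + 1 - Nat.clog 2 p : ℕ) : ℝ) * (p : ℝ) / 2 ≤
      (matchingWidth (completeBinaryTree r □ H) : ℝ) := by
  set c := Nat.clog 2 p
  set n := (r - c) / 2
  have hroot : 2 ^ (c + 2 * n) * (0 + 2) ≤ 2 ^ (r + 1) := by
    rw [← pow_succ]
    exact Nat.pow_le_pow_right two_pos (by omega)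
  have hmw : p * (n + 1) ≤ matchingWidth (completeBinaryTree r □ H) :=
    le_matchingWidth fun σ => by
      obtain ⟨i, hi, -, P, hP, -, hPs⟩ := hasSplitPrefixMatching_heapSubtree σ hH hp hcard
        (Nat.le_pow_clog one_lt_two p) n hroot
      exact ⟨i, hi, hP.hasCutMatching.mono hPs⟩
  have hle : (r + 1 - c) * p ≤ 2 * (p * (n + 1)) := by
    rw [mul_comm 2, mul_assoc, mul_comm p]
    exact Nat.mul_le_mul_right _ (by omega)
  rw [div_le_iff₀ two_pos]
  exact_mod_cast hle.trans (by omega)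
end
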